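/- Let (f_0, …, f_n) be a cocycle system of depth n and weight m. For 0 ≤ i ≤ n define F_i : P → ℂ by F_i(x) := x_3^{2i−m} · (det x)^{n−i} · Σ_{j=0}^{n−i} binom(n−i,j) · (x_3 x_4 / det x)^j · f_{i+j}(x_1/x_3) (this is well defined since Im(x_1·conj(x_3)) > 0 forces x_3 ≠ 0 and x_1/x_3 ∈ ℍ), and set F := F_0. Then: (i) F(z̃) = f_0(z) for all z ∈ ℍ; (ii) F(Ax) = F(x) for every A ∈ SL(2,ℤ) and x ∈ P; (iii) F(x·g) = k_2^n · k_1^{n−m} · Σ_{i=0}^{n} binom(n,i) · k_3^i · k_2^{−i} · F_i(x) for every x ∈ P and every g = [[k_1,k_3],[0,k_2]] ∈ G_0. -/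

import Mathlib

/-
Put `w = x₁/x₃` and `t = x₃x₄/det x`. Then `F(x) = x₃^(-m) (det x)^n ∑ₚ C(n,p) tᵖ fₚ(w)`
is a binomial generating sum, and both transformation laws reduce to the binomial shift
`∑ₚ C(n,p) (a+b)ᵖ Fₚ = ∑ᵢ C(n,i) aⁱ ∑ⱼ C(n-i,j) bʲ F_{i+j}`.
Under `x ↦ Ax` the cocycle relation writes each `fᵢ(Aw)` as such an inner sum with
`b = c/(cw+d)`, and the new parameter `t'` satisfies `t'/(cw+d)² + c/(cw+d) = t`, so the
generating sum comes back multiplied by `(cw+d)^m`, which cancels against `x₃ ↦ (cw+d)x₃`.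
Under `x ↦ x·g` the point `w` is unchanged while `t` becomes `x₃²k₃/(k₂ det x) + t`, and
expanding with the shift produces the `Fᵢ`.
-/
open Complex Finset

/-- A cocycle system of depth `n` and weight `m`: a tuple `(f 0, …, f n)` of holomorphic
functions on the upper half plane satisfying the defining transformation rule under
`SL(2,ℤ)`. -/
def IsCocycleSystem (n : ℕ) (m : ℤ) (f : ℕ → ℂ → ℂ) : Prop :=
  (∀ i ≤ n, DifferentiableOn ℂ (f i) {z : ℂ | 0 < z.im}) ∧
  ∀ A : Matrix (Fin 2) (Fin 2) ℤ, A.det = 1 → ∀ i ≤ n, ∀ z : ℂ, 0 < z.im →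
    f i (((A 0 0 : ℂ) * z + (A 0 1 : ℂ)) / ((A 1 0 : ℂ) * z + (A 1 1 : ℂ))) =
      ∑ j ∈ Finset.range (n - i + 1),
        ((n - i).choose j : ℂ) * (A 1 0 : ℂ) ^ j *
          ((A 1 0 : ℂ) * z + (A 1 1 : ℂ)) ^ (m - 2 * (i : ℤ) - (j : ℤ)) * f (i + j) z

/-- The lift `Fᵢ` to the period domain of the `i`-th member of a cocycle system. -/
noncomputable def periodLift (n : ℕ) (m : ℤ) (f : ℕ → ℂ → ℂ) (i : ℕ)
    (x : Matrix (Fin 2) (Fin 2) ℂ) : ℂ :=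
  (x 1 0) ^ (2 * (i : ℤ) - m) * x.det ^ (n - i) *
    ∑ j ∈ Finset.range (n - i + 1),
      ((n - i).choose j : ℂ) * ((x 1 0) * (x 1 1) / x.det) ^ j * f (i + j) (x 0 0 / x 1 0)

theorem sum_range_choose_mul_add_pow {R : Type*} [CommSemiring R] (n : ℕ) (a b : R)
    (F : ℕ → R) :
    ∑ p ∈ range (n + 1), (n.choose p : R) * (a + b) ^ p * F p =
      ∑ i ∈ range (n + 1), (n.choose i : R) * a ^ i *
        ∑ j ∈ range (n - i + 1), ((n - i).choose j : R) * b ^ j * F (i + j) := by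
  calc _ = ∑ p ∈ range (n + 1), ∑ i ∈ range (p + 1), (n.choose i : R) * a ^ i *
          (((n - i).choose (p - i) : R) * b ^ (p - i) * F (i + (p - i))) := by
        refine sum_congr rfl fun p _ => ?_
        rw [add_pow, mul_sum, sum_mul]
        refine sum_congr rfl fun i hi => ?_
        have hip : i ≤ p := Nat.lt_succ_iff.mp (mem_range.mp hi)
        have hchoose :
            (n.choose p : R) * p.choose i = n.choose i * ((n - i).choose (p - i) : R) := by
          rw [← Nat.cast_mul, ← Nat.cast_mul, Nat.choose_mul hip]
        calc _ = ((n.choose p : R) * p.choose i) * (a ^ i * b ^ (p - i) * F p) := by ring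
          _ = _ := by rw [hchoose, Nat.add_sub_cancel' hip]; ring
    _ = _ := by
        refine (sum_range_diag_flip (n + 1) fun i j => (n.choose i : R) * a ^ i *
          (((n - i).choose j : R) * b ^ j * F (i + j))).trans (sum_congr rfl fun i hi => ?_)
        rw [mul_sum, Nat.sub_add_comm (Nat.lt_succ_iff.mp (mem_range.mp hi))]

theorem Complex.im_div_eq_im_mul_conj_div_normSq (a b : ℂ) :
    (a / b).im = (a * starRingEnd ℂ b).im / normSq b := by
  rw [div_im, mul_im, conj_re, conj_im]
  ring

theorem Complex.ne_zero_of_im_mul_conj_pos {a b : ℂ} (h : 0 < (a * starRingEnd ℂ b).im) :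
    b ≠ 0 := by
  rintro rfl
  simp at h

theorem Complex.im_div_pos_of_im_mul_conj_pos {a b : ℂ} (h : 0 < (a * starRingEnd ℂ b).im) :
    0 < (a / b).im := by
  rw [im_div_eq_im_mul_conj_div_normSq]
  exact div_pos h (normSq_pos.mpr (ne_zero_of_im_mul_conj_pos h))

theorem Complex.ofReal_mul_add_ofReal_ne_zero {c d : ℝ} (hcd : c ≠ 0 ∨ d ≠ 0) {w : ℂ}
    (hw : 0 < w.im) : (c : ℂ) * w + d ≠ 0 := by
  intro h
  have hc : c = 0 := by
    have him : c * w.im = 0 := by simpa using congrArg im h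
    exact (mul_eq_zero.mp him).resolve_right hw.ne'
  have hd : d = 0 := by simpa [hc] using congrArg re h
  exact hcd.elim (· hc) (· hd)

theorem denom_ne_zero_of_det_eq_one {A : Matrix (Fin 2) (Fin 2) ℤ} (hA : A.det = 1) {w : ℂ}
    (hw : 0 < w.im) : (A 1 0 : ℂ) * w + A 1 1 ≠ 0 := by
  have hcd : (A 1 0 : ℝ) ≠ 0 ∨ (A 1 1 : ℝ) ≠ 0 := by
    by_contra! h
    norm_cast at h
    simp [Matrix.det_fin_two, h] at hA
  exact_mod_cast Complex.ofReal_mul_add_ofReal_ne_zero hcd hw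

section

variable {n : ℕ} {m : ℤ} {f : ℕ → ℂ → ℂ}

theorem periodLift_zero (x : Matrix (Fin 2) (Fin 2) ℂ) :
    periodLift n m f 0 x = x 1 0 ^ (-m) * x.det ^ n *
      ∑ p ∈ range (n + 1), (n.choose p : ℂ) * (x 1 0 * x 1 1 / x.det) ^ p *
        f p (x 0 0 / x 1 0) := by
  simp [periodLift]

theorem periodLift_zero_embed (z : ℂ) :
    periodLift n m f 0 !![z, -1; 1, 0] = f 0 z := by
  simp [periodLift_zero, Matrix.det_fin_two_of, sum_range_succ']

theorem IsCocycleSystem.sum_choose_mul_pow_apply_moebius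
    (hf : IsCocycleSystem n m f) {A : Matrix (Fin 2) (Fin 2) ℤ} (hA : A.det = 1)
    {w q : ℂ} (hw : 0 < w.im) (hq : (A 1 0 : ℂ) * w + A 1 1 = q) (V : ℂ) :
    ∑ i ∈ range (n + 1), (n.choose i : ℂ) * V ^ i * f i ((A 0 0 * w + A 0 1) / q) =
      q ^ m * ∑ p ∈ range (n + 1), (n.choose p : ℂ) * (V / q ^ 2 + A 1 0 / q) ^ p * f p w := by
  have hq₀ : q ≠ 0 := hq ▸ denom_ne_zero_of_det_eq_one hA hw
  rw [sum_range_choose_mul_add_pow, mul_sum]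
  refine sum_congr rfl fun i hi => ?_
  rw [← hq, hf.2 A hA i (Nat.lt_succ_iff.mp (mem_range.mp hi)) w hw, hq, mul_sum, mul_sum,
    mul_sum]
  refine sum_congr rfl fun j _ => ?_
  have hexp : q ^ (m - 2 * (i : ℤ) - j) = q ^ m / q ^ (2 * i + j) := by
    rw [← zpow_natCast, ← zpow_sub₀ hq₀]
    push_cast
    ring_nf
  rw [hexp, div_pow, div_pow, ← pow_mul]
  field_simp
  ring

theorem IsCocycleSystem.periodLift_zero_map_intCast_mul
    (hf : IsCocycleSystem n m f) {A : Matrix (Fin 2) (Fin 2) ℤ} (hA : A.det = 1)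
    {x : Matrix (Fin 2) (Fin 2) ℂ} (hx : x.det ≠ 0)
    (hP : 0 < (x 0 0 * starRingEnd ℂ (x 1 0)).im) :
    periodLift n m f 0 (A.map (Int.cast : ℤ → ℂ) * x) = periodLift n m f 0 x := by
  have hX := Complex.ne_zero_of_im_mul_conj_pos hP
  have hw := Complex.im_div_pos_of_im_mul_conj_pos hP
  obtain ⟨q, hq⟩ : ∃ q, (A 1 0 : ℂ) * (x 0 0 / x 1 0) + A 1 1 = q := ⟨_, rfl⟩
  have hq₀ : q ≠ 0 := hq ▸ denom_ne_zero_of_det_eq_one hA hw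
  have hXq : x 1 0 * q = A 1 0 * x 0 0 + A 1 1 * x 1 0 := by
    rw [← hq]
    field_simp
  have e00 : (A.map (Int.cast : ℤ → ℂ) * x) 0 0 =
      x 1 0 * (A 0 0 * (x 0 0 / x 1 0) + A 0 1) := by
    simp only [Matrix.mul_apply, Fin.sum_univ_two, Matrix.map_apply]
    field_simp
  have e10 : (A.map (Int.cast : ℤ → ℂ) * x) 1 0 = x 1 0 * q := by
    simp [Matrix.mul_apply, Fin.sum_univ_two, hXq]
  have e11 : (A.map (Int.cast : ℤ → ℂ) * x) 1 1 = A 1 0 * x 0 1 + A 1 1 * x 1 1 := by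
    simp [Matrix.mul_apply, Fin.sum_univ_two]
  have edet : (A.map (Int.cast : ℤ → ℂ) * x).det = x.det := by
    rw [Matrix.det_mul, ← Int.cast_det, hA, Int.cast_one, one_mul]
  have hbase : x 1 0 * q * (A 1 0 * x 0 1 + A 1 1 * x 1 1) / x.det / q ^ 2 + A 1 0 / q =
      x 1 0 * x 1 1 / x.det := by
    have hD := Matrix.det_fin_two x
    field_simp
    linear_combination (A 1 0 : ℂ) * hD - x 1 1 * hXq
  rw [periodLift_zero, periodLift_zero, e00, e10, e11, edet, mul_div_mul_left _ _ hX,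
    hf.sum_choose_mul_pow_apply_moebius hA hw hq, hbase, mul_zpow, zpow_neg q]
  field_simp

theorem periodLift_zero_mul_upperTriangular {x : Matrix (Fin 2) (Fin 2) ℂ} (hX : x 1 0 ≠ 0)
    (hx : x.det ≠ 0) {k₁ k₂ : ℂ} (k₃ : ℂ) (hk₁ : k₁ ≠ 0) (hk₂ : k₂ ≠ 0) :
    periodLift n m f 0 (x * !![k₁, k₃; 0, k₂]) =
      k₂ ^ n * k₁ ^ ((n : ℤ) - m) * ∑ i ∈ range (n + 1),
        (n.choose i : ℂ) * k₃ ^ i * k₂ ^ (-(i : ℤ)) * periodLift n m f i x := by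
  have e00 : (x * !![k₁, k₃; 0, k₂]) 0 0 = x 0 0 * k₁ := by
    simp [Matrix.mul_apply, Fin.sum_univ_two]
  have e10 : (x * !![k₁, k₃; 0, k₂]) 1 0 = x 1 0 * k₁ := by
    simp [Matrix.mul_apply, Fin.sum_univ_two]
  have e11 : (x * !![k₁, k₃; 0, k₂]) 1 1 = x 1 0 * k₃ + x 1 1 * k₂ := by
    simp [Matrix.mul_apply, Fin.sum_univ_two]
  have edet : (x * !![k₁, k₃; 0, k₂]).det = x.det * (k₁ * k₂) := by
    simp [Matrix.det_mul, Matrix.det_fin_two_of]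
  have hbase : x 1 0 * k₁ * (x 1 0 * k₃ + x 1 1 * k₂) / (x.det * (k₁ * k₂)) =
      x 1 0 ^ 2 * k₃ / (x.det * k₂) + x 1 0 * x 1 1 / x.det := by
    field_simp
  rw [periodLift_zero, e00, e10, e11, edet, mul_div_mul_right _ _ hk₁, hbase,
    sum_range_choose_mul_add_pow, mul_sum, mul_sum]
  refine sum_congr rfl fun i hi => ?_
  rw [periodLift, pow_sub₀ _ hx (Nat.lt_succ_iff.mp (mem_range.mp hi))]
  have hk₁m : k₁ ^ ((n : ℤ) - m) = k₁ ^ n * k₁ ^ (-m) := by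
    rw [sub_eq_add_neg, zpow_add₀ hk₁, zpow_natCast]
  have hXm : x 1 0 ^ (2 * (i : ℤ) - m) = x 1 0 ^ (2 * i) * x 1 0 ^ (-m) := by
    rw [sub_eq_add_neg, zpow_add₀ hX]
    norm_cast
  rw [mul_zpow, hk₁m, hXm, zpow_neg k₂, zpow_natCast]
  simp only [div_pow, mul_pow, ← pow_mul]
  field_simp

end

/-- the lifts `Fᵢ` of a cocycle system to the period domain
`P = {x ∈ GL(2,ℂ) : Im(x₁ x̄₃) > 0}` satisfy: (i) `F` restricts to `f₀` on the embedded
upper half plane; (ii) `F` is `SL(2,ℤ)`-invariant; (iii) `F` transforms under the right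
action of the Borel group `G₀` by the stated rule. -/
theorem periodLift_properties (n : ℕ) (m : ℤ) (f : ℕ → ℂ → ℂ)
    (hf : IsCocycleSystem n m f) :
    (∀ z : ℂ, 0 < z.im →
      periodLift n m f 0 !![z, -1; 1, 0] = f 0 z) ∧
    (∀ A : Matrix (Fin 2) (Fin 2) ℤ, A.det = 1 →
      ∀ x : Matrix (Fin 2) (Fin 2) ℂ, x.det ≠ 0 →
        0 < (x 0 0 * (starRingEnd ℂ) (x 1 0)).im →
        periodLift n m f 0 (A.map (Int.cast : ℤ → ℂ) * x) = periodLift n m f 0 x) ∧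
    (∀ x : Matrix (Fin 2) (Fin 2) ℂ, x.det ≠ 0 →
      0 < (x 0 0 * (starRingEnd ℂ) (x 1 0)).im →
      ∀ k₁ k₂ k₃ : ℂ, k₁ ≠ 0 → k₂ ≠ 0 →
        periodLift n m f 0 (x * !![k₁, k₃; 0, k₂]) =
          k₂ ^ n * k₁ ^ ((n : ℤ) - m) *
            ∑ i ∈ Finset.range (n + 1),
              (n.choose i : ℂ) * k₃ ^ i * k₂ ^ (-(i : ℤ)) * periodLift n m f i x) := by
  refine ⟨fun z _ => periodLift_zero_embed z,
    fun A hA x hx hP => hf.periodLift_zero_map_intCast_mul hA hx hP,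
    fun x hx hP k₁ k₂ k₃ hk₁ hk₂ => ?_⟩
  exact periodLift_zero_mul_upperTriangular (ne_zero_of_im_mul_conj_pos hP) hx k₃ hk₁ hk₂
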